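/- Dynamic Law of Large Numbers for Sources: Let (ν_n)_{n≥1} be a sequence with ν_n ∈ R_n for each n and d(ν_n, p) → 0 for some p ∈ P(X). Then p is the unique L-projection of p on P(X), and for every ε > 0, lim_{n→∞} π_n(B(p,ε)|ν_n) = 1. -/

import Mathlib

open scoped BigOperators Classical
open Filter Topology

noncomputable section

def pmfSet (X : Type*) [Fintype X] : Set (X → ℝ) :=
  {p | (∀ x, 0 ≤ p x) ∧ ∑ x, p x = 1}

def Rn (X : Type*) [Fintype X] (n : ℕ) : Set (X → ℝ) :=
  {q | q ∈ pmfSet X ∧ ∀ x, ∃ k : ℕ, q x = (k : ℝ) / (n : ℝ)}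

def ratPMF (X : Type*) [Fintype X] : Set (X → ℝ) :=
  {q | q ∈ pmfSet X ∧ ∀ x, ∃ r : ℚ, q x = (r : ℝ)}

def Ldiv {X : Type*} [Fintype X] (q p : X → ℝ) : EReal :=
  ∑ x, if p x = 0 then (0 : EReal)
    else if q x = 0 then (⊥ : EReal)
    else (↑(p x * Real.log (q x)) : EReal)

def LSup {X : Type*} [Fintype X] (Q : Set (X → ℝ)) (p : X → ℝ) : EReal :=
  ⨆ q ∈ Q, Ldiv q p

def Idiv {X : Type*} [Fintype X] (p q : X → ℝ) : EReal :=
  ∑ x, if p x = 0 then (0 : EReal)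
    else if q x = 0 then (⊤ : EReal)
    else (↑(p x * Real.log (p x / q x)) : EReal)

def typeProb {X : Type*} [Fintype X] (n : ℕ) (ν q : X → ℝ) : ℝ :=
  ∏ x, q x ^ ((n : ℝ) * ν x)

def post {X : Type*} [Fintype X] (n : ℕ) (ν : X → ℝ) (Q : Set (X → ℝ)) : ℝ :=
  (∑' q : ↥(Q ∩ Rn X n), typeProb n ν ↑q) / (∑' q : ↥(Rn X n), typeProb n ν ↑q)

def postGen {X : Type*} [Fintype X] (w : (X → ℝ) → ℝ) (n : ℕ) (ν : X → ℝ)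
    (Q : Set (X → ℝ)) : ℝ :=
  (∑' q : ↥(Q ∩ Rn X n), w ↑q * typeProb n ν ↑q) /
  (∑' q : ↥(Rn X n), w ↑q * typeProb n ν ↑q)

def tv {X : Type*} [Fintype X] (p q : X → ℝ) : ℝ := (1 / 2) * ∑ x, |p x - q x|

def tvBall {X : Type*} [Fintype X] (q : X → ℝ) (ε : ℝ) : Set (X → ℝ) :=
  {p | p ∈ pmfSet X ∧ tv p q ≤ ε}

def elog (x : ℝ) : EReal := if x ≤ 0 then (⊥ : EReal) else (↑(Real.log x) : EReal)

def linFam {X : Type*} [Fintype X] {k : ℕ} (u : Fin k → X → ℝ) (a : Fin k → ℝ) :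
    Set (X → ℝ) :=
  {q | q ∈ pmfSet X ∧ ∀ j, ∑ x, q x * u j x = a j}

def lambdaN {X : Type*} [Fintype X] (w : (X → ℝ) → ℝ) (n : ℕ) (ν : X → ℝ)
    (C : Set (X → ℝ)) : EReal :=
  ⨆ q ∈ C ∩ {q | q ∈ Rn X n ∧ 0 < w q},
    (Ldiv q ν + (↑((1 : ℝ) / n * Real.log (w q)) : EReal))

def priorN {X : Type*} [Fintype X] (c : ℕ → (X → ℝ) → (X → ℝ)) (pr : (X → ℝ) → ℝ)
    (n : ℕ) (qn : X → ℝ) : ℝ :=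
  ∑' q : ↥{q | q ∈ ratPMF X ∧ c n q = qn}, pr ↑q

section Helpers
-- ## helpers

def Lreal {X : Type*} [Fintype X] (q p : X → ℝ) : ℝ :=
  ∑ x, if p x = 0 then 0 else p x * Real.log (q x)

lemma ereal_coe_fsum {α : Type*} (s : Finset α) (f : α → ℝ) :
    ((∑ i ∈ s, f i : ℝ) : EReal) = ∑ i ∈ s, (f i : EReal) :=
  map_sum (⟨⟨Real.toEReal, EReal.coe_zero⟩, EReal.coe_add⟩ : ℝ →+ EReal) f s

variable {X : Type*} [Fintype X]

lemma pmf_le_one {p : X → ℝ} (hp : p ∈ pmfSet X) (x : X) : p x ≤ 1 := by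
  have := hp.2
  have h : ∀ y ∈ Finset.univ, 0 ≤ p y := fun y _ => hp.1 y
  calc p x ≤ ∑ y, p y := Finset.single_le_sum h (Finset.mem_univ x)
  _ = 1 := hp.2

lemma Ldiv_eq_coe {q p : X → ℝ} (hsupp : ∀ x, p x ≠ 0 → q x ≠ 0) :
    Ldiv q p = ((Lreal q p : ℝ) : EReal) := by
  rw [Lreal, ereal_coe_fsum, Ldiv]
  refine Finset.sum_congr rfl fun x _ => ?_
  by_cases hp : p x = 0
  · simp [hp]
  · simp [hp, hsupp x hp]

lemma Ldiv_eq_bot {q p : X → ℝ} {x0 : X} (hp : p x0 ≠ 0) (hq : q x0 = 0) :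
    Ldiv q p = ⊥ := by
  rw [Ldiv, ← Finset.add_sum_erase _ _ (Finset.mem_univ x0)]
  simp [hp, hq, EReal.bot_add]

lemma sum_support_diff_nonneg {p q : X → ℝ} (hp : p ∈ pmfSet X) (hq : q ∈ pmfSet X) :
    0 ≤ ∑ x, (if p x = 0 then 0 else p x - q x) := by
  have h1 : ∑ x, (if p x = 0 then 0 else p x - q x)
      = ∑ x, ((if p x = 0 then 0 else p x) - (if p x = 0 then 0 else q x)) := by
    refine Finset.sum_congr rfl fun x _ => ?_; split <;> simp
  have h2 : ∑ x, (if p x = 0 then (0:ℝ) else p x) = 1 := by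
    rw [← hp.2]; exact Finset.sum_congr rfl fun x _ => by split <;> simp [*]
  have h3 : ∑ x, (if p x = 0 then (0:ℝ) else q x) ≤ 1 := by
    rw [← hq.2]
    refine Finset.sum_le_sum fun x _ => ?_
    split
    · exact hq.1 x
    · exact le_rfl
  rw [h1, Finset.sum_sub_distrib, h2]
  linarith

lemma gibbs_pointwise {p q : X → ℝ} (hp : p ∈ pmfSet X) (hq : q ∈ pmfSet X)
    (hsupp : ∀ x, p x ≠ 0 → q x ≠ 0) (x : X) :
    (if p x = 0 then 0 else p x * Real.log (q x)) + (if p x = 0 then 0 else p x - q x)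
      ≤ (if p x = 0 then 0 else p x * Real.log (p x)) := by
  by_cases h0 : p x = 0
  · simp [h0]
  · simp only [h0, if_false]
    have hpx : 0 < p x := lt_of_le_of_ne (hp.1 x) (Ne.symm h0)
    have hqx : 0 < q x := lt_of_le_of_ne (hq.1 x) (Ne.symm (hsupp x h0))
    have hlog : Real.log (q x / p x) ≤ q x / p x - 1 :=
      Real.log_le_sub_one_of_pos (div_pos hqx hpx)
    rw [Real.log_div (ne_of_gt hqx) (ne_of_gt hpx)] at hlog
    have h4 := mul_le_mul_of_nonneg_left hlog hpx.le
    have h5 : p x * (q x / p x - 1) = q x - p x := by field_simp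
    rw [h5, mul_sub] at h4
    linarith

lemma gibbs_le {p q : X → ℝ} (hp : p ∈ pmfSet X) (hq : q ∈ pmfSet X)
    (hsupp : ∀ x, p x ≠ 0 → q x ≠ 0) : Lreal q p ≤ Lreal p p := by
  have h := Finset.sum_le_sum (fun x (_ : x ∈ Finset.univ) => gibbs_pointwise hp hq hsupp x)
  rw [Finset.sum_add_distrib] at h
  have h2 := sum_support_diff_nonneg hp hq
  unfold Lreal
  linarith

lemma gibbs_eq {p q : X → ℝ} (hp : p ∈ pmfSet X) (hq : q ∈ pmfSet X)
    (hsupp : ∀ x, p x ≠ 0 → q x ≠ 0) (heq : Lreal q p = Lreal p p) : q = p := by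
  have hpt := fun x (_ : x ∈ Finset.univ) => gibbs_pointwise hp hq hsupp x
  have h := Finset.sum_le_sum hpt
  rw [Finset.sum_add_distrib] at h
  have h2 := sum_support_diff_nonneg hp hq
  unfold Lreal at heq
  -- each pointwise inequality is equality, and sum_support_diff = 0
  have hsum0 : ∑ x, (if p x = 0 then 0 else p x - q x) = 0 := le_antisymm (by linarith) h2
  have hall : ∀ x ∈ Finset.univ,
      (if p x = 0 then 0 else p x * Real.log (q x)) + (if p x = 0 then 0 else p x - q x)
        = (if p x = 0 then 0 else p x * Real.log (p x)) := by
    refine (Finset.sum_eq_sum_iff_of_le hpt).1 ?_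
    rw [Finset.sum_add_distrib]
    linarith
  -- on the support, q x = p x
  have hqp : ∀ x, p x ≠ 0 → q x = p x := by
    intro x h0
    have hx := hall x (Finset.mem_univ x)
    simp only [h0, if_false] at hx
    have hpx : 0 < p x := lt_of_le_of_ne (hp.1 x) (Ne.symm h0)
    have hqx : 0 < q x := lt_of_le_of_ne (hq.1 x) (Ne.symm (hsupp x h0))
    by_contra hne
    have hne' : q x / p x ≠ 1 := by
      intro hc
      exact hne (by field_simp at hc; linarith)
    have hlt : Real.log (q x / p x) < q x / p x - 1 :=
      Real.log_lt_sub_one_of_pos (div_pos hqx hpx) hne'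
    rw [Real.log_div (ne_of_gt hqx) (ne_of_gt hpx)] at hlt
    have h4 := (mul_lt_mul_iff_right₀ hpx).2 hlt
    have h5 : p x * (q x / p x - 1) = q x - p x := by field_simp
    rw [h5, mul_sub] at h4
    linarith
  -- off the support, q x = 0
  have hoff : ∀ x, p x = 0 → q x = 0 := by
    intro x h0
    have e1 : ∀ y, (if p y = 0 then q y else 0) = q y - (if p y = 0 then 0 else p y) := by
      intro y
      by_cases h : p y = 0
      · simp [h]
      · simp [h, hqp y h]
    have h2' : ∑ y, (if p y = 0 then (0:ℝ) else p y) = 1 := by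
      rw [← hp.2]; exact Finset.sum_congr rfl fun y _ => by split <;> simp [*]
    have hsplit : ∑ y, (if p y = 0 then q y else 0) = 0 := by
      simp only [e1, Finset.sum_sub_distrib, hq.2, h2', sub_self]
    have := (Finset.sum_eq_zero_iff_of_nonneg
      (fun y _ => by split; exacts [hq.1 y, le_rfl])).1 hsplit x (Finset.mem_univ x)
    simpa [h0] using this
  funext x
  by_cases h0 : p x = 0
  · rw [h0]; exact hoff x h0
  · exact hqp x h0

lemma Ldiv_self_eq {p : X → ℝ} : Ldiv p p = ((Lreal p p : ℝ) : EReal) :=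
  Ldiv_eq_coe (fun _ h => h)

lemma part1 {p : X → ℝ} (hp : p ∈ pmfSet X) : ∀ q ∈ pmfSet X, Ldiv q p ≤ Ldiv p p := by
  intro q hq
  by_cases hsupp : ∀ x, p x ≠ 0 → q x ≠ 0
  · rw [Ldiv_eq_coe hsupp, Ldiv_self_eq]
    exact_mod_cast gibbs_le hp hq hsupp
  · push_neg at hsupp
    obtain ⟨x0, hx0, hq0⟩ := hsupp
    rw [Ldiv_eq_bot hx0 hq0]
    exact bot_le

lemma part2 {p : X → ℝ} (hp : p ∈ pmfSet X) :
    ∀ q ∈ pmfSet X, Ldiv q p = Ldiv p p → q = p := by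
  intro q hq heq
  by_cases hsupp : ∀ x, p x ≠ 0 → q x ≠ 0
  · rw [Ldiv_eq_coe hsupp, Ldiv_self_eq] at heq
    exact gibbs_eq hp hq hsupp (by exact_mod_cast heq)
  · push_neg at hsupp
    obtain ⟨x0, hx0, hq0⟩ := hsupp
    rw [Ldiv_eq_bot hx0 hq0, Ldiv_self_eq] at heq
    exact absurd heq.symm (EReal.coe_ne_bot _)

-- ## Part 3 machinery

lemma sqrt_log_ineq {t : ℝ} (h0 : 0 < t) (h1 : t ≤ 1) :
    Real.log t ≤ (t - 1) - (1 - t)^2 / 4 := by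
  set v := Real.sqrt t with hvdef
  have hv : v ^ 2 = t := Real.sq_sqrt h0.le
  have hv0 : 0 < v := Real.sqrt_pos.2 h0
  have hlog : Real.log t = 2 * Real.log v := by
    rw [← hv, ← Real.rpow_natCast v 2, Real.log_rpow hv0]; norm_num
  have h2 : Real.log v ≤ v - 1 := Real.log_le_sub_one_of_pos hv0
  have hv1 : v ≤ 1 := by nlinarith
  rw [hlog]
  nlinarith [mul_nonneg (mul_nonneg (sub_nonneg.2 hv1) (sq_nonneg (v - 1)))
    (by linarith : (0:ℝ) ≤ v + 3)]

lemma tv_eq_sum_max {p q : X → ℝ} (hp : p ∈ pmfSet X) (hq : q ∈ pmfSet X) :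
    tv p q = ∑ x, max (p x - q x) 0 := by
  have habs : ∀ a : ℝ, |a| = 2 * max a 0 - a := by
    intro a
    rcases le_or_gt 0 a with h | h
    · rw [abs_of_nonneg h, max_eq_left h]; ring
    · rw [abs_of_neg h, max_eq_right h.le]; ring
  unfold tv
  simp only [habs]
  rw [Finset.sum_sub_distrib]
  have hz : ∑ x, (p x - q x) = 0 := by
    rw [Finset.sum_sub_distrib, hp.2, hq.2]; ring
  rw [hz, ← Finset.mul_sum]
  ring

lemma pinsker_pointwise {p q : X → ℝ} (hp : p ∈ pmfSet X) (hq : q ∈ pmfSet X)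
    (hsupp : ∀ x, p x ≠ 0 → q x ≠ 0) (x : X) :
    (if p x = 0 then 0 else p x * Real.log (q x)) + ((if p x = 0 then 0 else p x - q x)
      + (max (p x - q x) 0)^2 / 4)
      ≤ (if p x = 0 then 0 else p x * Real.log (p x)) := by
  by_cases h0 : p x = 0
  · have hqx := hq.1 x
    have hm : max (p x - q x) 0 = 0 := max_eq_right (by rw [h0]; linarith)
    rw [hm]; simp [h0]
  · simp only [h0, if_false]
    have hpx : 0 < p x := lt_of_le_of_ne (hp.1 x) (Ne.symm h0)
    have hqx : 0 < q x := lt_of_le_of_ne (hq.1 x) (Ne.symm (hsupp x h0))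
    rcases le_or_gt (p x) (q x) with hle | hlt
    · have hmax : max (p x - q x) 0 = 0 := max_eq_right (by linarith)
      have := gibbs_pointwise hp hq hsupp x
      simp only [h0, if_false] at this
      rw [hmax]
      nlinarith
    · have hmax : max (p x - q x) 0 = p x - q x := max_eq_left (by linarith)
      rw [hmax]
      have ht0 : 0 < q x / p x := div_pos hqx hpx
      have ht1 : q x / p x ≤ 1 := (div_le_one hpx).2 hlt.le
      have hkey := sqrt_log_ineq ht0 ht1
      rw [Real.log_div (ne_of_gt hqx) (ne_of_gt hpx)] at hkey
      have h4 := mul_le_mul_of_nonneg_left hkey hpx.le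
      have h5 : p x * (q x / p x - 1) = q x - p x := by field_simp
      have h6 : p x * ((1 - q x / p x)^2 / 4) = (p x - q x)^2 / p x / 4 := by
        field_simp
      have hp1 : p x ≤ 1 := pmf_le_one hp x
      have h7 : (p x - q x)^2 / 4 ≤ (p x - q x)^2 / p x / 4 := by
        have : (p x - q x)^2 ≤ (p x - q x)^2 / p x := by
          rw [le_div_iff₀ hpx]
          nlinarith [sq_nonneg (p x - q x)]
        linarith
      rw [mul_sub, mul_sub, h5, h6] at h4
      linarith

lemma pinsker_lite {p q : X → ℝ} (hp : p ∈ pmfSet X) (hq : q ∈ pmfSet X)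
    (hsupp : ∀ x, p x ≠ 0 → q x ≠ 0) (hcard : 0 < Fintype.card X) :
    Lreal q p + (tv p q)^2 / (4 * Fintype.card X) ≤ Lreal p p := by
  have h := Finset.sum_le_sum (fun x (_ : x ∈ Finset.univ) => pinsker_pointwise hp hq hsupp x)
  rw [Finset.sum_add_distrib, Finset.sum_add_distrib] at h
  have h2 := sum_support_diff_nonneg hp hq
  have hcs : (∑ x, max (p x - q x) 0)^2 ≤
      (Fintype.card X : ℝ) * ∑ x, (max (p x - q x) 0)^2 := by
    have := sq_sum_le_card_mul_sum_sq (s := (Finset.univ : Finset X))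
      (f := fun x => max (p x - q x) 0)
    simpa [Pi.div_apply, one_div] using this
  rw [← tv_eq_sum_max hp hq] at hcs
  have hm : (0:ℝ) < (Fintype.card X : ℝ) := by exact_mod_cast hcard
  have hE : (tv p q)^2 / (4 * Fintype.card X) ≤ ∑ x, (max (p x - q x) 0)^2 / 4 := by
    rw [← Finset.sum_div, div_le_div_iff₀ (by positivity) (by norm_num)]
    nlinarith
  unfold Lreal
  linarith

lemma tv_nonneg (p q : X → ℝ) : 0 ≤ tv p q := by
  unfold tv
  have : (0:ℝ) ≤ ∑ x, |p x - q x| := Finset.sum_nonneg fun x _ => abs_nonneg _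
  linarith

lemma tv_triangle (p q r : X → ℝ) : tv p r ≤ tv p q + tv q r := by
  unfold tv
  rw [← mul_add, ← Finset.sum_add_distrib]
  have h : ∑ x, |p x - r x| ≤ ∑ x, (|p x - q x| + |q x - r x|) :=
    Finset.sum_le_sum fun x _ => abs_sub_le _ _ _
  linarith

lemma typeProb_nonneg {n : ℕ} {ν q : X → ℝ} (hq : ∀ x, 0 ≤ q x) :
    0 ≤ typeProb n ν q :=
  Finset.prod_nonneg fun x _ => Real.rpow_nonneg (hq x) _

lemma typeProb_self_pos {n : ℕ} {ν : X → ℝ} (hν : ∀ x, 0 ≤ ν x) :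
    0 < typeProb n ν ν := by
  apply Finset.prod_pos
  intro x _
  rcases eq_or_lt_of_le (hν x) with h | h
  · rw [← h, mul_zero, Real.rpow_zero]; norm_num
  · exact Real.rpow_pos_of_pos h _

lemma typeProb_eq_exp {n : ℕ} {ν q : X → ℝ} (hq0 : ∀ x, 0 ≤ q x)
    (hν0 : ∀ x, 0 ≤ ν x) (hsupp : ∀ x, ν x ≠ 0 → q x ≠ 0) :
    typeProb n ν q = Real.exp ((n : ℝ) * Lreal q ν) := by
  unfold typeProb Lreal
  rw [Finset.mul_sum, Real.exp_sum]
  refine Finset.prod_congr rfl fun x _ => ?_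
  by_cases hx : ν x = 0
  · simp [hx]
  · have hqx : 0 < q x := lt_of_le_of_ne (hq0 x) (Ne.symm (hsupp x hx))
    rw [Real.rpow_def_of_pos hqx]
    simp only [hx, if_false]
    congr 1
    ring

lemma typeProb_le_of_far {n : ℕ} (hn : 1 ≤ n) {ν q : X → ℝ}
    (hν : ν ∈ pmfSet X) (hq : q ∈ pmfSet X) (hcard : 0 < Fintype.card X) :
    typeProb n ν q ≤ typeProb n ν ν *
      Real.exp (-((n : ℝ) * ((tv ν q)^2 / (4 * Fintype.card X)))) := by
  by_cases hsupp : ∀ x, ν x ≠ 0 → q x ≠ 0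
  · rw [typeProb_eq_exp hq.1 hν.1 hsupp, typeProb_eq_exp hν.1 hν.1 (fun _ h => h),
      ← Real.exp_add]
    apply Real.exp_le_exp.2
    have hpk := pinsker_lite hν hq hsupp hcard
    have hn0 : (0:ℝ) ≤ n := Nat.cast_nonneg n
    nlinarith
  · push_neg at hsupp
    obtain ⟨x0, hx0, hq0⟩ := hsupp
    have hνx : 0 < ν x0 := lt_of_le_of_ne (hν.1 x0) (Ne.symm hx0)
    have hnn : (0:ℝ) < (n:ℝ) := by exact_mod_cast hn
    have hz : typeProb n ν q = 0 := by
      apply Finset.prod_eq_zero (Finset.mem_univ x0)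
      rw [hq0]
      exact Real.zero_rpow (by positivity)
    rw [hz]
    exact mul_nonneg (typeProb_nonneg hν.1) (Real.exp_pos _).le

lemma Rn_subset_image (n : ℕ) (hn : 1 ≤ n) :
    Rn X n ⊆ (fun k : X → Fin (n+1) => fun x => ((k x : ℕ) : ℝ) / n) '' Set.univ := by
  intro q hq
  choose k hk using hq.2
  have hnpos : (0:ℝ) < n := by exact_mod_cast hn
  have hkle : ∀ x, k x < n + 1 := by
    intro x
    by_contra h
    push_neg at h
    have h1 : q x ≤ 1 := pmf_le_one hq.1 x
    have h2 : ((k x : ℝ)) / n ≤ 1 := (hk x) ▸ h1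
    rw [div_le_one hnpos] at h2
    have h3 : (n:ℝ) + 1 ≤ k x := by exact_mod_cast h
    linarith
  exact ⟨fun x => ⟨k x, hkle x⟩, Set.mem_univ _, by funext x; exact (hk x).symm⟩

lemma Rn_finite (n : ℕ) (hn : 1 ≤ n) : (Rn X n).Finite :=
  Set.Finite.subset (Set.finite_univ.image _) (Rn_subset_image n hn)

lemma subset_Rn_card_le {n : ℕ} (hn : 1 ≤ n) {S : Set (X → ℝ)} (hS : S ⊆ Rn X n)
    (hfin : S.Finite) : hfin.toFinset.card ≤ (n+1) ^ (Fintype.card X) := by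
  classical
  have hsub : hfin.toFinset ⊆ Finset.image
      (fun k : X → Fin (n+1) => fun x => ((k x : ℕ) : ℝ) / n) Finset.univ := by
    intro q hqmem
    rw [Set.Finite.mem_toFinset] at hqmem
    obtain ⟨k, _, hk⟩ := Rn_subset_image n hn (hS hqmem)
    exact Finset.mem_image.2 ⟨k, Finset.mem_univ _, hk⟩
  calc hfin.toFinset.card ≤ _ := Finset.card_le_card hsub
  _ ≤ (Finset.univ : Finset (X → Fin (n+1))).card := Finset.card_image_le
  _ = (n+1) ^ (Fintype.card X) := by
      rw [Finset.card_univ, Fintype.card_fun, Fintype.card_fin]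

lemma tv_comm (p q : X → ℝ) : tv p q = tv q p := by
  unfold tv
  congr 1
  exact Finset.sum_congr rfl fun x _ => abs_sub_comm _ _

lemma tsum_finite_set {S : Set (X → ℝ)} (hfin : S.Finite) (f : (X → ℝ) → ℝ) :
    ∑' q : ↥S, f ↑q = ∑ q ∈ hfin.toFinset, f q := by
  haveI := hfin.fintype
  rw [tsum_fintype, ← Finset.sum_coe_sort hfin.toFinset f]
  exact Fintype.sum_equiv (Equiv.subtypeEquivRight (fun x => (hfin.mem_toFinset).symm))
    _ _ (fun q => rfl)

lemma post_bounds [Nonempty X] {n : ℕ} (hn : 1 ≤ n) {ν p : X → ℝ}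
    (hν : ν ∈ Rn X n) (hp : p ∈ pmfSet X) {ε : ℝ} (hε : 0 < ε)
    (hclose : tv ν p ≤ ε / 2) :
    1 / (1 + ((n:ℝ)+1) ^ (Fintype.card X)
        * Real.exp (-(n:ℝ) * (ε^2 / (16 * Fintype.card X)))) ≤ post n ν (tvBall p ε)
      ∧ post n ν (tvBall p ε) ≤ 1 := by
  classical
  have hcard : 0 < Fintype.card X := Fintype.card_pos
  set m := Fintype.card X with hm
  have hfin : (Rn X n).Finite := Rn_finite n hn
  have hfin1 : (tvBall p ε ∩ Rn X n).Finite := hfin.subset Set.inter_subset_right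
  set A : Finset (X → ℝ) := hfin.toFinset with hA
  set A1 : Finset (X → ℝ) := A.filter (· ∈ tvBall p ε) with hA1
  set A2 : Finset (X → ℝ) := A.filter (fun q => ¬ q ∈ tvBall p ε) with hA2
  set f : (X → ℝ) → ℝ := typeProb n ν with hf
  have hf_nonneg : ∀ q ∈ A, 0 ≤ f q := by
    intro q hq
    rw [hA, Set.Finite.mem_toFinset] at hq
    exact typeProb_nonneg hq.1.1
  -- identify the tsums with finset sums
  have hnum : (∑' q : ↥(tvBall p ε ∩ Rn X n), typeProb n ν ↑q) = ∑ q ∈ A1, f q := by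
    rw [tsum_finite_set hfin1]
    refine Finset.sum_congr ?_ fun _ _ => rfl
    ext q
    simp only [Set.Finite.mem_toFinset, Set.mem_inter_iff, hA1, Finset.mem_filter,
      hA, Set.Finite.mem_toFinset]
    tauto
  have hden : (∑' q : ↥(Rn X n), typeProb n ν ↑q) = ∑ q ∈ A1, f q + ∑ q ∈ A2, f q := by
    rw [tsum_finite_set hfin]
    exact (Finset.sum_filter_add_sum_filter_not A _ f).symm
  -- the numerator is at least f ν > 0
  have hν_mem : ν ∈ A1 := by
    rw [hA1, Finset.mem_filter, hA, Set.Finite.mem_toFinset]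
    exact ⟨hν, hν.1, by linarith⟩
  have hFpos : 0 < f ν := typeProb_self_pos hν.1.1
  have hN : f ν ≤ ∑ q ∈ A1, f q :=
    Finset.single_le_sum (fun q hq => hf_nonneg q (Finset.mem_of_mem_filter q hq)) hν_mem
  have hNpos : 0 < ∑ q ∈ A1, f q := lt_of_lt_of_le hFpos hN
  have hBad_nonneg : 0 ≤ ∑ q ∈ A2, f q :=
    Finset.sum_nonneg fun q hq => hf_nonneg q (Finset.mem_of_mem_filter q hq)
  -- bound each bad term
  set c : ℝ := ε^2 / (16 * m) with hc
  have hbad_term : ∀ q ∈ A2, f q ≤ f ν * Real.exp (-(n:ℝ) * c) := by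
    intro q hq
    rw [hA2, Finset.mem_filter] at hq
    obtain ⟨hqA, hqB⟩ := hq
    rw [hA, Set.Finite.mem_toFinset] at hqA
    have hqpmf : q ∈ pmfSet X := hqA.1
    have hfar : ε / 2 ≤ tv ν q := by
      have htri : tv q p ≤ tv q ν + tv ν p := tv_triangle q ν p
      have hqB' : ¬ (tv q p ≤ ε) := fun h => hqB ⟨hqpmf, h⟩
      push_neg at hqB'
      rw [tv_comm ν q]
      linarith
    have hb := typeProb_le_of_far hn hν.1 hqpmf hcard
    have hexp : Real.exp (-((n:ℝ) * ((tv ν q)^2 / (4 * m)))) ≤ Real.exp (-(n:ℝ) * c) := by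
      apply Real.exp_le_exp.2
      have hsq : (ε/2)^2 ≤ (tv ν q)^2 := by
        have h0 : 0 ≤ ε/2 := by linarith
        nlinarith
      have hmn : (0:ℝ) < m := by exact_mod_cast hcard
      have hn0 : (0:ℝ) ≤ n := Nat.cast_nonneg n
      rw [hc]
      have hdiv : ε^2 / (16 * m) ≤ (tv ν q)^2 / (4 * m) := by
        rw [div_le_div_iff₀ (by positivity) (by positivity)]
        nlinarith
      nlinarith
    calc f q ≤ f ν * Real.exp (-((n:ℝ) * ((tv ν q)^2 / (4 * m)))) := hb
    _ ≤ f ν * Real.exp (-(n:ℝ) * c) := by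
        exact mul_le_mul_of_nonneg_left hexp hFpos.le
  -- bound the bad sum
  have hA2card : (A2.card : ℝ) ≤ ((n:ℝ)+1) ^ m := by
    have hsub : (A2 : Set (X → ℝ)).Finite := A2.finite_toSet
    have hcardle : A2.card ≤ (n+1) ^ m := by
      have h1 : ∀ q ∈ A2, q ∈ Rn X n := by
        intro q hq
        have := Finset.mem_of_mem_filter q hq
        rwa [hA, Set.Finite.mem_toFinset] at this
      have h2 : hsub.toFinset.card ≤ (n+1) ^ m := by
        apply subset_Rn_card_le hn
        · intro q hq
          exact h1 q (Finset.mem_coe.1 hq)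
      have h3 : hsub.toFinset = A2 := by
        ext q; rw [Set.Finite.mem_toFinset, Finset.mem_coe]
      rw [h3] at h2
      exact h2
    calc (A2.card : ℝ) ≤ ((n+1 : ℕ) ^ m : ℕ) := by exact_mod_cast hcardle
    _ = ((n:ℝ)+1) ^ m := by push_cast; ring
  have hBad : ∑ q ∈ A2, f q ≤ ((n:ℝ)+1) ^ m * Real.exp (-(n:ℝ) * c) * f ν := by
    calc ∑ q ∈ A2, f q ≤ A2.card • (f ν * Real.exp (-(n:ℝ) * c)) :=
        Finset.sum_le_card_nsmul A2 f _ hbad_term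
    _ = (A2.card : ℝ) * (f ν * Real.exp (-(n:ℝ) * c)) := by
        rw [nsmul_eq_mul]
    _ ≤ ((n:ℝ)+1) ^ m * (f ν * Real.exp (-(n:ℝ) * c)) := by
        apply mul_le_mul_of_nonneg_right hA2card
        positivity
    _ = ((n:ℝ)+1) ^ m * Real.exp (-(n:ℝ) * c) * f ν := by ring
  -- conclude
  set N := ∑ q ∈ A1, f q
  set Bad := ∑ q ∈ A2, f q
  set K := ((n:ℝ)+1) ^ m * Real.exp (-(n:ℝ) * c) with hK
  have hKpos : 0 < K := by positivity
  have hpost : post n ν (tvBall p ε) = N / (N + Bad) := by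
    rw [post, hnum, hden]
  constructor
  · rw [hpost]
    rw [div_le_div_iff₀ (by positivity) (by linarith)]
    have hBadN : Bad ≤ K * N := le_trans hBad (by nlinarith)
    nlinarith
  · rw [hpost]
    apply div_le_one_of_le₀ (by linarith) (by linarith)

lemma aux_tendsto (m : ℕ) {c : ℝ} (hc : 0 < c) :
    Tendsto (fun n : ℕ => ((n:ℝ)+1) ^ m * Real.exp (-(n:ℝ) * c)) atTop (𝓝 0) := by
  have h1 := Real.tendsto_pow_mul_exp_neg_atTop_nhds_zero m
  have h2 : Tendsto (fun n : ℕ => c * ((n:ℝ)+1)) atTop atTop :=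
    Tendsto.const_mul_atTop hc
      (tendsto_atTop_add_const_right _ 1 tendsto_natCast_atTop_atTop)
  have h3 := h1.comp h2
  have h4 : Tendsto (fun n : ℕ =>
      ((c*((n:ℝ)+1))^m * Real.exp (-(c*((n:ℝ)+1)))) * (Real.exp c / c^m))
      atTop (𝓝 (0 * (Real.exp c / c^m))) := h3.mul_const _
  rw [zero_mul] at h4
  refine h4.congr fun n => ?_
  have hcm : (c:ℝ)^m ≠ 0 := by positivity
  have key : Real.exp (-(c * ((n:ℝ)+1))) * Real.exp c = Real.exp (-(n:ℝ) * c) := by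
    rw [← Real.exp_add]; ring_nf
  rw [mul_pow]
  calc c^m * ((n:ℝ)+1)^m * Real.exp (-(c*((n:ℝ)+1))) * (Real.exp c / c^m)
      = ((n:ℝ)+1)^m * (Real.exp (-(c*((n:ℝ)+1))) * Real.exp c) * (c^m / c^m) := by
        ring
    _ = ((n:ℝ)+1)^m * Real.exp (-(n:ℝ)*c) * 1 := by rw [key, div_self hcm]
    _ = ((n:ℝ)+1)^m * Real.exp (-(n:ℝ)*c) := by ring

end Helpers

/-- Dynamic Law of Large Numbers for Sources. -/
theorem dynamic_LLN_for_sources {X : Type*} [Fintype X] [Nonempty X]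
    (ν : ℕ → X → ℝ) (hν : ∀ n, 1 ≤ n → ν n ∈ Rn X n)
    (p : X → ℝ) (hp : p ∈ pmfSet X)
    (hconv : Filter.Tendsto (fun n => tv (ν n) p) Filter.atTop (nhds 0)) :
    (∀ q ∈ pmfSet X, Ldiv q p ≤ Ldiv p p) ∧
    (∀ q ∈ pmfSet X, Ldiv q p = Ldiv p p → q = p) ∧
    (∀ ε : ℝ, 0 < ε →
      Filter.Tendsto (fun n : ℕ => post n (ν n) (tvBall p ε))
        Filter.atTop (nhds 1)) := by
  refine ⟨part1 hp, part2 hp, ?_⟩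
  intro ε hε
  have hcard : 0 < Fintype.card X := Fintype.card_pos
  set m := Fintype.card X with hm
  have hmpos : (0:ℝ) < m := by exact_mod_cast hcard
  set c : ℝ := ε^2 / (16 * m) with hc
  have hcpos : 0 < c := by positivity
  set a : ℕ → ℝ := fun n => ((n:ℝ)+1) ^ m * Real.exp (-(n:ℝ) * c) with ha
  have hato : Tendsto a atTop (𝓝 0) := aux_tendsto m hcpos
  have hlow : Tendsto (fun n : ℕ => 1 / (1 + a n)) atTop (𝓝 1) := by
    have h1 : Tendsto (fun n : ℕ => 1 + a n) atTop (𝓝 (1 + 0)) :=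
      tendsto_const_nhds.add hato
    rw [add_zero] at h1
    have h2 := h1.inv₀ one_ne_zero
    rw [inv_one] at h2
    exact h2.congr fun n => (one_div _).symm
  have hev1 : ∀ᶠ n : ℕ in atTop, 1 ≤ n := eventually_ge_atTop 1
  have hev2 : ∀ᶠ n : ℕ in atTop, tv (ν n) p ≤ ε / 2 :=
    hconv.eventually (eventually_le_nhds (by linarith))
  apply tendsto_of_tendsto_of_tendsto_of_le_of_le' hlow tendsto_const_nhds
  · filter_upwards [hev1, hev2] with n h1 h2
    exact (post_bounds h1 (hν n h1) hp hε h2).1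
  · filter_upwards [hev1, hev2] with n h1 h2
    exact (post_bounds h1 (hν n h1) hp hε h2).2
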